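/- For ρ ∈ (−1, 1) and γ ∈ ℝ, define L(γ, ρ) = ∫₀^∞ ∫_{−∞}^{∞} w r_delta((y+γ)/w) φ(y) dy f_W(w) dw (so that the scaled expected length SEL_delta(γ, ρ) is a positive constant, depending only on ρ, times L(γ, ρ)). Then L is an even function of γ for each fixed ρ and an even function of ρ for each fixed γ: L(−γ, ρ) = L(γ, ρ) and L(γ, −ρ) = L(γ, ρ). -/
import Mathlib


open MeasureTheory ProbabilityTheory Matrix Set Filter

noncomputable section

/-- The standard normal probability density function `φ`. -/
def phiPdf (x : ℝ) : ℝ := (Real.sqrt (2 * Real.pi))⁻¹ * Real.exp (-(x ^ 2) / 2)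

/-- The standard normal cumulative distribution function `Φ`. -/
def PhiCdf (x : ℝ) : ℝ := ∫ u in Iic x, phiPdf u

/-- The density `f_W` of `W = σ̂/σ`, i.e. of `(Q/m)^{1/2}` for `Q ~ χ²_m`. -/
def fW (m : ℕ) (w : ℝ) : ℝ :=
  (2 / Real.Gamma ((m : ℝ) / 2)) * ((m : ℝ) / 2) ^ ((m : ℝ) / 2) * w ^ ((m : ℝ) - 1) *
    Real.exp (-(m : ℝ) * w ^ 2 / 2)

/-- `IsTQuantile m a t` says that `t` is the `1 - a/2` quantile of the Student `t`
distribution with `m` degrees of freedom, characterized by `P(Z ≤ t W₀) = 1 - a/2`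
for `Z ~ N(0,1)` independent of `W₀ = (Q/m)^{1/2}`, `Q ~ χ²_m`. -/
def IsTQuantile (m : ℕ) (a t : ℝ) : Prop :=
  ∫ w in Ioi (0 : ℝ), PhiCdf (t * w) * fW m w = 1 - a / 2

/-- The function `k_m` (with `d = d_m = t_m(α̃)` supplied as a parameter). -/
def km (m : ℕ) (d γ : ℝ) : ℝ :=
  ∫ w in Ioi (0 : ℝ),
    (phiPdf (d * w + γ) - phiPdf (d * w - γ) +
      γ * (PhiCdf (d * w - γ) - PhiCdf (-(d * w) - γ))) * fW m w

/-- The function `q_m`. -/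
def qm (m : ℕ) (d γ : ℝ) : ℝ :=
  ∫ w in Ioi (0 : ℝ),
    (-(d * w) * phiPdf (d * w + γ) - d * w * phiPdf (d * w - γ) +
      PhiCdf (d * w - γ) - PhiCdf (-(d * w) - γ)) * fW m w

/-- The function `h_m`. -/
def hm (m : ℕ) (d γ : ℝ) : ℝ :=
  ∫ w in Ioi (0 : ℝ),
    ((d * w) ^ 2 * phiPdf (d * w + γ) - (d * w) ^ 2 * phiPdf (d * w - γ)) * fW m w

/-- The function `r_delta` (depending on `ρ` through `ρ²` only). -/
def rdelta (m n : ℕ) (d ρ γ : ℝ) : ℝ :=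
  Real.sqrt (ρ ^ 2 / (2 * n) * (km m d γ + hm m d γ - γ * qm m d γ) ^ 2 +
    1 - 2 * ρ ^ 2 * qm m d γ + ρ ^ 2 * (qm m d γ) ^ 2)

lemma phiPdf_neg (x : ℝ) : phiPdf (-x) = phiPdf x := by
  simp [phiPdf, neg_pow]

lemma integrable_phiPdf : MeasureTheory.Integrable phiPdf := by
  have h := (integrable_exp_neg_mul_sq (by norm_num : (0:ℝ) < 1/2)).const_mul
    ((Real.sqrt (2 * Real.pi))⁻¹)
  have he : phiPdf = fun x : ℝ => (Real.sqrt (2 * Real.pi))⁻¹ * Real.exp (-(1/2) * x ^ 2) := by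
    funext x
    rw [phiPdf]
    ring_nf
  rw [he]
  exact h

lemma PhiCdf_add_neg (x : ℝ) : PhiCdf x + PhiCdf (-x) = ∫ u, phiPdf u := by
  have h1 : PhiCdf (-x) = ∫ u in Ioi x, phiPdf u := by
    rw [PhiCdf, ← integral_comp_neg_Ioi]
    simp [phiPdf_neg]
  rw [PhiCdf, h1]
  exact intervalIntegral.integral_Iic_add_Ioi integrable_phiPdf.integrableOn integrable_phiPdf.integrableOn

lemma PhiCdf_symm (a γ : ℝ) :
    PhiCdf (a + γ) - PhiCdf (-a + γ) = PhiCdf (a - γ) - PhiCdf (-a - γ) := by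
  have h1 := PhiCdf_add_neg (a + γ)
  have h2 := PhiCdf_add_neg (a - γ)
  have e1 : -(a + γ) = -a - γ := by ring
  have e2 : -(a - γ) = -a + γ := by ring
  rw [e1] at h1
  rw [e2] at h2
  linarith

lemma km_neg (m : ℕ) (d γ : ℝ) : km m d (-γ) = -km m d γ := by
  rw [km, km, ← MeasureTheory.integral_neg]
  apply MeasureTheory.integral_congr_ae
  filter_upwards with w
  have h := PhiCdf_symm (d * w) γ
  have e1 : d * w + -γ = d * w - γ := by ring
  have e2 : d * w - -γ = d * w + γ := by ring
  have e3 : -(d * w) - -γ = -(d * w) + γ := by ring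
  rw [e1, e2, e3]
  have key2 : PhiCdf (-(d * w) + γ) = PhiCdf (d * w + γ) - PhiCdf (d * w - γ) + PhiCdf (-(d * w) - γ) := by linarith [h]
  rw [key2]
  ring

lemma qm_neg (m : ℕ) (d γ : ℝ) : qm m d (-γ) = qm m d γ := by
  rw [qm, qm]
  apply MeasureTheory.integral_congr_ae
  filter_upwards with w
  have key : PhiCdf (d * w + γ) - PhiCdf (-(d * w) + γ) = PhiCdf (d * w - γ) - PhiCdf (-(d * w) - γ) := PhiCdf_symm (d * w) γ
  have e1 : d * w + -γ = d * w - γ := by ring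
  have e2 : d * w - -γ = d * w + γ := by ring
  have e3 : -(d * w) - -γ = -(d * w) + γ := by ring
  have key2 : PhiCdf (-(d * w) + γ) = PhiCdf (d * w + γ) - PhiCdf (d * w - γ) + PhiCdf (-(d * w) - γ) := by linarith [key]
  rw [e1, e2, e3, key2]
  ring

lemma hm_neg (m : ℕ) (d γ : ℝ) : hm m d (-γ) = -hm m d γ := by
  rw [hm, hm, ← MeasureTheory.integral_neg]
  apply MeasureTheory.integral_congr_ae
  filter_upwards with w
  have e1 : d * w + -γ = d * w - γ := by ring
  have e2 : d * w - -γ = d * w + γ := by ring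
  rw [e1, e2]
  ring

lemma rdelta_neg_gamma (m n : ℕ) (d ρ γ : ℝ) : rdelta m n d ρ (-γ) = rdelta m n d ρ γ := by
  rw [rdelta, rdelta, km_neg, hm_neg, qm_neg]
  congr 1
  ring

lemma rdelta_neg_rho (m n : ℕ) (d ρ γ : ℝ) : rdelta m n d (-ρ) γ = rdelta m n d ρ γ := by
  rw [rdelta, rdelta, neg_pow]
  norm_num

/-- the function `L(γ, ρ) = ∫₀^∞ ∫ w r_delta((y+γ)/w) φ(y) dy f_W(w) dw`
(proportional to the scaled expected length) is an even function of `γ` for each `ρ`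
and an even function of `ρ` for each `γ`. -/
theorem SEL_delta_even (m n : ℕ) (hm : 0 < m) (hmn : m < n)
    (αt : ℝ) (hαt : αt ∈ Ioo (0 : ℝ) 1) (d : ℝ) (hd : IsTQuantile m αt d)
    (L : ℝ → ℝ → ℝ)
    (hL : L = fun γ ρ =>
      ∫ w in Ioi (0 : ℝ),
        (∫ y, w * rdelta m n d ρ ((y + γ) / w) * phiPdf y) * fW m w) :
    ∀ γ : ℝ, ∀ ρ ∈ Ioo (-1 : ℝ) 1, L (-γ) ρ = L γ ρ ∧ L γ (-ρ) = L γ ρ := by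
  intro γ ρ hρ
  subst hL
  constructor
  · apply MeasureTheory.integral_congr_ae
    filter_upwards with w
    congr 1
    rw [← MeasureTheory.integral_neg_eq_self (fun y => w * rdelta m n d ρ ((y + γ) / w) * phiPdf y)]
    apply MeasureTheory.integral_congr_ae
    filter_upwards with y
    rw [phiPdf_neg]
    have e : (-y + γ) / w = -((y + -γ) / w) := by ring
    rw [e, rdelta_neg_gamma]
  · apply MeasureTheory.integral_congr_ae
    filter_upwards with w
    congr 1
    apply MeasureTheory.integral_congr_ae
    filter_upwards with y
    rw [rdelta_neg_rho]
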